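/- Let A, B be bounded operators on a Hilbert space such that |A| and |B| are invertible, let r > 1 and s satisfy 1/r + 1/s = 1, and let p be a real number. Then |A|A|^{p−1} − B|B|^{p−1}|² ≤ |A|^{p−1}( r|A−B|² + s·||B|^p|A|^{1−p} − |B||² )|A|^{p−1} in the Loewner order. -/

import Mathlib

/-! Write `K = |A|^(p-1)`, `V = B|B|^(-1)` and `E = |B|^p |A|^(1-p) - |B|`. Since `|B|` is
invertible, `V` is an isometry, so `|VE| = |E|`, and a direct computation gives
`A|A|^(p-1) - B|B|^(p-1) = (A - B - VE) K`. For Hölder conjugate `r, s` the weighted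
parallelogram inequality `|x - y|² ≤ r|x|² + s|y|²` holds in any star-ordered algebra, its
defect being `(r-1)⁻¹ |(r-1)x + y|²`. Conjugating it by the self-adjoint `K` gives the estimate. -/

variable {H : Type*} [NormedAddCommGroup H] [InnerProductSpace ℂ H] [CompleteSpace H]

/-- The absolute value `|A| = (A*A)^{1/2}` of a bounded operator. -/
noncomputable def opAbs (A : H →L[ℂ] H) : H →L[ℂ] H := CFC.sqrt (star A * A)

/-- `A = U|A|` is the (canonical) polar decomposition of `A`: `U` is a partial isometry
whose kernel equals the kernel of `A` (so that `U*U` is the projection onto `(ker A)ᗮ`). -/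
def IsPolarDecomp (A U : H →L[ℂ] H) : Prop :=
  A = U * opAbs A ∧ U * star U * U = U ∧ LinearMap.ker (U : H →ₗ[ℂ] H) = LinearMap.ker (A : H →ₗ[ℂ] H)

section WeightedParallelogram

variable {R : Type*} [Ring R] [StarRing R] [PartialOrder R] [StarOrderedRing R]
  [Algebra ℝ R] [StarModule ℝ R]

theorem star_sub_mul_sub_le_one_add_smul_add (x y : R) {t : ℝ} (ht : 0 < t) :
    star (x - y) * (x - y) ≤ (1 + t) • (star x * x) + (1 + t⁻¹) • (star y * y) := by
  have hdefect : (1 + t) • (star x * x) + (1 + t⁻¹) • (star y * y) - star (x - y) * (x - y)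
      = t⁻¹ • (star (t • x + y) * (t • x + y)) := by
    simp only [star_add, star_sub, star_smul, star_trivial, add_mul, mul_add, sub_mul, mul_sub,
      smul_mul_assoc, mul_smul_comm]
    match_scalars <;> field_simp <;> ring
  rw [← sub_nonneg, hdefect]
  exact smul_nonneg (inv_nonneg.mpr ht.le) (star_mul_self_nonneg _)

theorem star_sub_mul_sub_le_of_holderConjugate {r s : ℝ} (hrs : r.HolderConjugate s) (x y : R) :
    star (x - y) * (x - y) ≤ r • (star x * x) + s • (star y * y) := by
  have hs : s = 1 + (r - 1)⁻¹ := by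
    rw [hrs.conjugate_eq]
    field_simp [hrs.sub_one_ne_zero]
    ring
  simpa only [add_sub_cancel, ← hs] using star_sub_mul_sub_le_one_add_smul_add x y hrs.sub_one_pos

end WeightedParallelogram

section Rpow

variable {A : Type*} [PartialOrder A] [Ring A] [StarRing A] [TopologicalSpace A]
  [StarOrderedRing A] [Algebra ℝ A] [ContinuousFunctionalCalculus ℝ A IsSelfAdjoint]
  [NonnegSpectrumClass ℝ A]

theorem rpow_neg_one_mul_self {b : A} (hb : IsStrictlyPositive b) : b ^ (-1 : ℝ) * b = 1 := by
  simpa only [CFC.rpow_one b hb.nonneg] using CFC.rpow_neg_mul_rpow 1 hb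

theorem mul_rpow_neg_one_self {b : A} (hb : IsStrictlyPositive b) : b * b ^ (-1 : ℝ) = 1 := by
  simpa only [CFC.rpow_one b hb.nonneg] using CFC.rpow_mul_rpow_neg 1 hb

theorem star_mul_rpow_neg_one_mul_mul_rpow_neg_one {x b : A} (hb : IsStrictlyPositive b)
    (hx : star x * x = b * b) : star (x * b ^ (-1 : ℝ)) * (x * b ^ (-1 : ℝ)) = 1 :=
  calc star (x * b ^ (-1 : ℝ)) * (x * b ^ (-1 : ℝ))
      = b ^ (-1 : ℝ) * (star x * x) * b ^ (-1 : ℝ) := by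
        rw [star_mul, (IsSelfAdjoint.of_nonneg CFC.rpow_nonneg).star_eq]
        simp only [mul_assoc]
    _ = 1 := by rw [hx, ← mul_assoc, rpow_neg_one_mul_self hb, one_mul, mul_rpow_neg_one_self hb]

theorem mul_rpow_sub_one_sub_mul_rpow_sub_one {a b : A} (ha : IsStrictlyPositive a)
    (hb : IsStrictlyPositive b) (x y : A) (p : ℝ) :
    x * a ^ (p - 1) - y * b ^ (p - 1)
      = (x - y - y * b ^ (-1 : ℝ) * (b ^ p * a ^ (1 - p) - b)) * a ^ (p - 1) := by
  have ha_cancel : a ^ (1 - p) * a ^ (p - 1) = 1 := by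
    rw [← CFC.rpow_add ha.isUnit, sub_add_sub_cancel', sub_self, CFC.rpow_zero a ha.nonneg]
  have hb_pow : b ^ (-1 : ℝ) * b ^ p = b ^ (p - 1) := by
    rw [← CFC.rpow_add hb.isUnit, neg_add_eq_sub]
  have hcorrection : y * b ^ (-1 : ℝ) * (b ^ p * a ^ (1 - p) - b) * a ^ (p - 1)
      = y * b ^ (p - 1) - y * a ^ (p - 1) := by
    simp only [sub_mul, mul_sub, mul_assoc, ha_cancel, mul_one]
    rw [← mul_assoc (b ^ (-1 : ℝ)), hb_pow, rpow_neg_one_mul_self hb, one_mul]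
  rw [sub_mul, hcorrection, sub_mul]
  abel

end Rpow

theorem opAbs_sq (X : H →L[ℂ] H) : opAbs X ^ 2 = star X * X :=
  CFC.sq_sqrt _ (star_mul_self_nonneg X)

theorem opAbs_mul_self (X : H →L[ℂ] H) : opAbs X * opAbs X = star X * X :=
  CFC.sqrt_mul_sqrt_self _ (star_mul_self_nonneg X)

theorem isStrictlyPositive_opAbs {X : H →L[ℂ] H} (hX : IsUnit (opAbs X)) :
    IsStrictlyPositive (opAbs X) :=
  IsStrictlyPositive.iff_of_unital.mpr ⟨CFC.sqrt_nonneg _, hX⟩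

theorem p_angular_distance_estimate (A B : H →L[ℂ] H)
    (hA : IsUnit (opAbs A)) (hB : IsUnit (opAbs B))
    (r s : ℝ) (hr : 1 < r) (hrs : 1 / r + 1 / s = 1) (p : ℝ) :
    opAbs (A * CFC.rpow (opAbs A) (p - 1) - B * CFC.rpow (opAbs B) (p - 1)) ^ 2
      ≤ CFC.rpow (opAbs A) (p - 1)
          * (r • opAbs (A - B) ^ 2
             + s • opAbs (CFC.rpow (opAbs B) p * CFC.rpow (opAbs A) (1 - p) - opAbs B) ^ 2)
          * CFC.rpow (opAbs A) (p - 1) := by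
  have hrs' : r.HolderConjugate s :=
    Real.holderConjugate_iff.mpr ⟨hr, by simpa only [one_div] using hrs⟩
  simp only [CFC.rpow_eq_pow]
  set K := opAbs A ^ (p - 1)
  set V := B * opAbs B ^ (-1 : ℝ)
  set E := opAbs B ^ p * opAbs A ^ (1 - p) - opAbs B
  have hV : star V * V = 1 :=
    star_mul_rpow_neg_one_mul_mul_rpow_neg_one (isStrictlyPositive_opAbs hB) (opAbs_mul_self B).symm
  have hVE : star (V * E) * (V * E) = star E * E := by
    rw [star_mul, mul_assoc, ← mul_assoc (star V), hV, one_mul]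
  have hK : star K = K := (IsSelfAdjoint.of_nonneg CFC.rpow_nonneg).star_eq
  calc opAbs (A * K - B * opAbs B ^ (p - 1)) ^ 2
      = star K * (star (A - B - V * E) * (A - B - V * E)) * K := by
        rw [opAbs_sq, mul_rpow_sub_one_sub_mul_rpow_sub_one (isStrictlyPositive_opAbs hA)
          (isStrictlyPositive_opAbs hB), star_mul, ← mul_assoc, mul_assoc (star K)]
    _ ≤ star K * (r • (star (A - B) * (A - B)) + s • (star (V * E) * (V * E))) * K :=
        star_left_conjugate_le_conjugate (star_sub_mul_sub_le_of_holderConjugate hrs' _ _) K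
    _ = K * (r • opAbs (A - B) ^ 2 + s • opAbs E ^ 2) * K := by
        rw [hVE, hK, opAbs_sq, opAbs_sq]
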